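/- Weak rearrangement: suppose the achievement matrix x is obtained from y by an association decreasing rearrangement among the poor, i.e. there are two distinct individuals i, i' with ρ_k(y_i) = ρ_k(y_{i'}) = 1 and y_{ij} ≥ y_{i'j} for all j, such that for each dimension j either (x_{ij}, x_{i'j}) = (y_{i'j}, y_{ij}) or (x_{ij}, x_{i'j}) = (y_{ij}, y_{i'j}), all rows other than i and i' coincide in x and y, and the rows x_i and x_{i'} are not comparable by componentwise vector dominance. Then for all α ≥ 0, FGT_α(x; z) ≤ FGT_α(y; z). -/

import Mathlib

open Finset

/-- Deprivation gap `r_{ij}^α` for an achievement row `y` (convention `0 ^ (0:ℝ) = 1`). -/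
noncomputable def gap {d : ℕ} (z y : Fin d → ℝ) (α : ℝ) (j : Fin d) : ℝ :=
  if y j ≤ z j then ((z j - y j) / z j) ^ α else 0

/-- Network-adjusted deprivation `D_{ij}^α`. -/
noncomputable def Dnet {d : ℕ} (M : Fin d → Fin d → ℝ) (z y : Fin d → ℝ) (α : ℝ)
    (j : Fin d) : ℝ :=
  gap z y α j + (1 / ((d : ℝ) - 1)) * ∑ j' ∈ Finset.univ.erase j, M j j' * gap z y α j'

/-- Sum `Σ_j` of the `j`-th column of `M`. -/
noncomputable def colSum {d : ℕ} (M : Fin d → Fin d → ℝ) (j : Fin d) : ℝ := ∑ j', M j' j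

/-- Weighted deprivation count `D_i = Σ_j w_j D_{ij}^0`. -/
noncomputable def Dcount {d : ℕ} (M : Fin d → Fin d → ℝ) (z w y : Fin d → ℝ) : ℝ :=
  ∑ j, w j * Dnet M z y 0 j

/-- Dual-cutoff identification function `ρ_k`. -/
noncomputable def rho {d : ℕ} (M : Fin d → Fin d → ℝ) (z w : Fin d → ℝ) (k : ℝ)
    (y : Fin d → ℝ) : ℝ :=
  if k ≤ Dcount M z w y then 1 else 0

/-- Network-adjusted FGT measure with normalizing constant `dt`. -/
noncomputable def FGT {N d : ℕ} (M : Fin d → Fin d → ℝ) (z w : Fin d → ℝ) (k α dt : ℝ)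
    (y : Fin N → Fin d → ℝ) : ℝ :=
  (1 / ((N : ℝ) * dt)) * ∑ i, ∑ j, w j * Dnet M z (y i) α j * rho M z w k (y i)

/-!
In every dimension a swap of entries between two rows permutes their two deprivation gaps, so
it preserves their sum; since the network-adjusted deprivation is linear in the gaps, the total
weighted deprivation of the two rows is preserved as well. Both rows are poor in `y`, so they
contribute their full deprivation to `FGT(y)`, whereas in `x` each contributes at most its
(nonnegative) deprivation because `ρ_k ≤ 1`. All other rows are unchanged.
-/

theorem Fintype.sum_le_sum_of_pair_le_of_eq_off {ι β : Type*} [Fintype ι]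
    [AddCommGroup β] [PartialOrder β] [IsOrderedAddMonoid β] {f g : ι → β} {a b : ι}
    (hab : a ≠ b) (hrest : ∀ m, m ≠ a → m ≠ b → f m = g m) (hpair : f a + f b ≤ g a + g b) :
    ∑ m, f m ≤ ∑ m, g m := by
  have hdiff : ∑ m, (g m - f m) = (g a - f a) + (g b - f b) :=
    Fintype.sum_eq_add a b hab fun m hm => by rw [hrest m hm.1 hm.2, sub_self]
  rw [← sub_nonneg, ← sum_sub_distrib, hdiff]
  rw [← sub_nonneg] at hpair
  convert hpair using 1
  abel

section Deprivation

variable {d : ℕ} (M : Fin d → Fin d → ℝ) (z w : Fin d → ℝ) (α : ℝ)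

noncomputable def weightedDeprivation (v : Fin d → ℝ) : ℝ :=
  ∑ j, w j * Dnet M z v α j

theorem FGT_eq_sum_weightedDeprivation_mul_rho {N : ℕ} (k dt : ℝ) (u : Fin N → Fin d → ℝ) :
    FGT M z w k α dt u =
      (1 / ((N : ℝ) * dt)) * ∑ m, weightedDeprivation M z w α (u m) * rho M z w k (u m) := by
  simp only [FGT, weightedDeprivation, sum_mul]

theorem rho_le_one (k : ℝ) (v : Fin d → ℝ) : rho M z w k v ≤ 1 := by
  unfold rho
  split_ifs <;> norm_num

variable {M z w α}

theorem gap_nonneg {v : Fin d → ℝ} {j : Fin d} (hz : 0 ≤ z j) : 0 ≤ gap z v α j := by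
  unfold gap
  split_ifs with hv
  · exact Real.rpow_nonneg (div_nonneg (sub_nonneg.mpr hv) hz) α
  · exact le_rfl

theorem Dnet_nonneg {v : Fin d → ℝ} {j : Fin d} (hz : ∀ j, 0 ≤ z j) (hM : ∀ j', 0 ≤ M j j') :
    0 ≤ Dnet M z v α j := by
  have hd : (1 : ℝ) ≤ d := by exact_mod_cast j.pos
  have hcoef : 0 ≤ 1 / ((d : ℝ) - 1) := by
    rw [one_div_nonneg]
    linarith
  exact add_nonneg (gap_nonneg (hz j))
    (mul_nonneg hcoef (sum_nonneg fun j' _ => mul_nonneg (hM j') (gap_nonneg (hz j'))))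

theorem weightedDeprivation_nonneg {v : Fin d → ℝ} (hz : ∀ j, 0 ≤ z j)
    (hM : ∀ j j', 0 ≤ M j j') (hw : ∀ j, 0 ≤ w j) : 0 ≤ weightedDeprivation M z w α v :=
  sum_nonneg fun j _ => mul_nonneg (hw j) (Dnet_nonneg hz (hM j))

def IsCoordSwap (a b a' b' : Fin d → ℝ) : Prop :=
  ∀ j, (a j = b' j ∧ b j = a' j) ∨ (a j = a' j ∧ b j = b' j)

variable {a b a' b' : Fin d → ℝ}

theorem IsCoordSwap.gap_add_gap (h : IsCoordSwap a b a' b') (j : Fin d) :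
    gap z a α j + gap z b α j = gap z a' α j + gap z b' α j := by
  rcases h j with ⟨ha, hb⟩ | ⟨ha, hb⟩ <;> simp only [gap, ha, hb]
  exact add_comm _ _

theorem IsCoordSwap.Dnet_add_Dnet (h : IsCoordSwap a b a' b') (j : Fin d) :
    Dnet M z a α j + Dnet M z b α j = Dnet M z a' α j + Dnet M z b' α j := by
  have hsum :
      ∑ j' ∈ univ.erase j, M j j' * gap z a α j' + ∑ j' ∈ univ.erase j, M j j' * gap z b α j' =
        ∑ j' ∈ univ.erase j, M j j' * gap z a' α j' +
          ∑ j' ∈ univ.erase j, M j j' * gap z b' α j' := by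
    simp only [← sum_add_distrib, ← mul_add, h.gap_add_gap]
  unfold Dnet
  linear_combination h.gap_add_gap j + (1 / ((d : ℝ) - 1)) * hsum

theorem IsCoordSwap.weightedDeprivation_add (h : IsCoordSwap a b a' b') :
    weightedDeprivation M z w α a + weightedDeprivation M z w α b =
      weightedDeprivation M z w α a' + weightedDeprivation M z w α b' := by
  simp only [weightedDeprivation, ← sum_add_distrib, ← mul_add, h.Dnet_add_Dnet]

end Deprivation

theorem FGT_weak_rearrangement_general
    (d : ℕ) (z : Fin d → ℝ) (hz : ∀ j, 0 < z j)
    (M : Fin d → Fin d → ℝ) (hM0 : ∀ j j', 0 ≤ M j j')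
    (w : Fin d → ℝ) (hw : ∀ j, 0 < w j)
    (dt : ℝ)
    (k : ℝ) (hk0 : 0 < k) (hk1 : k ≤ dt) (α : ℝ)
    (N : ℕ)
    (x y : Fin N → Fin d → ℝ)
    (i i' : Fin N) (hne : i ≠ i')
    (hpoor : rho M z w k (y i) = 1) (hpoor' : rho M z w k (y i') = 1)
    (hswap : ∀ j, (x i j = y i' j ∧ x i' j = y i j) ∨ (x i j = y i j ∧ x i' j = y i' j))
    (hother : ∀ i'', i'' ≠ i → i'' ≠ i' → x i'' = y i'') :
    FGT M z w k α dt x ≤ FGT M z w k α dt y := by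
  have hdt : 0 < dt := hk0.trans_le hk1
  have hS : ∀ v, 0 ≤ weightedDeprivation M z w α v := fun _ =>
    weightedDeprivation_nonneg (fun j => (hz j).le) hM0 (fun j => (hw j).le)
  rw [FGT_eq_sum_weightedDeprivation_mul_rho, FGT_eq_sum_weightedDeprivation_mul_rho]
  refine mul_le_mul_of_nonneg_left ?_ (by positivity)
  refine Fintype.sum_le_sum_of_pair_le_of_eq_off hne (fun m hm hm' => by rw [hother m hm hm']) ?_
  rw [hpoor, hpoor', mul_one, mul_one, ← IsCoordSwap.weightedDeprivation_add hswap]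
  exact add_le_add (mul_le_of_le_one_right (hS _) (rho_le_one M z w k _))
    (mul_le_of_le_one_right (hS _) (rho_le_one M z w k _))

/-- weak rearrangement — an association decreasing rearrangement among the
poor does not increase FGT. -/
theorem FGT_weak_rearrangement
    (d : ℕ) (hd : 2 ≤ d) (z : Fin d → ℝ) (hz : ∀ j, 0 < z j)
    (M : Fin d → Fin d → ℝ) (hM0 : ∀ j j', 0 ≤ M j j') (hM1 : ∀ j j', M j j' ≤ 1)
    (hMdiag : ∀ j, M j j = 1)
    (w : Fin d → ℝ) (hw : ∀ j, 0 < w j) (hwsum : (∑ j, w j) = (d : ℝ))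
    (dt : ℝ) (hdt : dt = (d : ℝ) + ((∑ j, w j * colSum M j) - (d : ℝ)) / ((d : ℝ) - 1))
    (k : ℝ) (hk0 : 0 < k) (hk1 : k ≤ dt) (α : ℝ) (hα : 0 ≤ α)
    (N : ℕ) (hN : 1 ≤ N)
    (x y : Fin N → Fin d → ℝ) (hx : ∀ i j, 0 ≤ x i j) (hy : ∀ i j, 0 ≤ y i j)
    (i i' : Fin N) (hne : i ≠ i')
    (hpoor : rho M z w k (y i) = 1) (hpoor' : rho M z w k (y i') = 1)
    (hdom : ∀ j, y i' j ≤ y i j)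
    (hswap : ∀ j, (x i j = y i' j ∧ x i' j = y i j) ∨ (x i j = y i j ∧ x i' j = y i' j))
    (hother : ∀ i'', i'' ≠ i → i'' ≠ i' → x i'' = y i'')
    (hincomp : ¬(∀ j, x i j ≤ x i' j) ∧ ¬(∀ j, x i' j ≤ x i j)) :
    FGT M z w k α dt x ≤ FGT M z w k α dt y :=
  FGT_weak_rearrangement_general d z hz M hM0 w hw dt k hk0 hk1 α N x y i i' hne hpoor hpoor' hswap
    hother
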